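/- arXiv:2302.04421 — 4 statements merged into one kernel-verified Lean document; each statement's English description precedes it below -/
import Mathlib

section
/- Let N, C be positive integers, T1 > 0, T2 > 0, and let d_{ij} (1 ≤ i ≤ N, 1 ≤ j ≤ C) be real numbers. Fix a probability vector w ∈ ℝ^N. Then the minimum, over all N×C matrices U whose rows u_i = (u_{i1}, …, u_{iC}) are probability vectors in ℝ^C (with the convention 0·log 0 = 0), of F(w,U) = Σ_{i=1}^N w_i ( Σ_{j=1}^C u_{ij} d_{ij} + T1 Σ_{j=1}^C u_{ij} log u_{ij} ) − T2 Σ_{i=1}^N w_i log w_i equals −T1 Σ_{i=1}^N w_i log( Σ_{j=1}^C exp(−d_{ij}/T1) ) − T2 Σ_{i=1}^N w_i log w_i. -/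
open Real Finset

private lemma gibbs_row (C : ℕ) (hC : 0 < C) (T1 : ℝ) (hT1 : 0 < T1)
    (dv : Fin C → ℝ) (u : Fin C → ℝ) (hu : ∀ j, 0 ≤ u j) (hs : ∑ j, u j = 1) :
    -T1 * Real.log (∑ j, Real.exp (-(dv j) / T1)) ≤
      ∑ j, u j * dv j + T1 * ∑ j, u j * Real.log (u j) := by
  haveI : Nonempty (Fin C) := ⟨⟨0, hC⟩⟩
  set Z : ℝ := ∑ j, Real.exp (-(dv j) / T1) with hZdef
  have hZ : 0 < Z := Finset.sum_pos (fun j _ => Real.exp_pos _) Finset.univ_nonempty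
  have key : ∀ j, u j * (-(dv j) / T1 - Real.log Z) - u j * Real.log (u j)
      ≤ Real.exp (-(dv j) / T1) / Z - u j := by
    intro j
    rcases eq_or_lt_of_le (hu j) with h0 | h0
    · rw [← h0]; simp [div_nonneg (Real.exp_pos _).le hZ.le]
    · have hp : 0 < Real.exp (-(dv j) / T1) / Z := div_pos (Real.exp_pos _) hZ
      have hlog : Real.log (Real.exp (-(dv j) / T1) / Z / u j) ≤
          Real.exp (-(dv j) / T1) / Z / u j - 1 :=
        Real.log_le_sub_one_of_pos (div_pos hp h0)
      have hld : Real.log (Real.exp (-(dv j) / T1) / Z / u j)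
          = (-(dv j) / T1 - Real.log Z) - Real.log (u j) := by
        rw [Real.log_div (ne_of_gt hp) (ne_of_gt h0), Real.log_div (Real.exp_ne_zero _) (ne_of_gt hZ),
          Real.log_exp]
      rw [hld] at hlog
      have := mul_le_mul_of_nonneg_left hlog (hu j)
      calc u j * (-(dv j) / T1 - Real.log Z) - u j * Real.log (u j)
          = u j * ((-(dv j) / T1 - Real.log Z) - Real.log (u j)) := by ring
        _ ≤ u j * (Real.exp (-(dv j) / T1) / Z / u j - 1) :=
            mul_le_mul_of_nonneg_left hlog (hu j)
        _ = Real.exp (-(dv j) / T1) / Z - u j := by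
            field_simp
  have hsum := Finset.sum_le_sum (fun j (_ : j ∈ Finset.univ) => key j)
  have hps : ∑ j, Real.exp (-(dv j) / T1) / Z = 1 := by
    rw [← Finset.sum_div, ← hZdef, div_self (ne_of_gt hZ)]
  have h1 : ∑ j, (u j * (-(dv j) / T1 - Real.log Z) - u j * Real.log (u j))
      = (∑ j, u j * (-(dv j) / T1)) - Real.log Z - ∑ j, u j * Real.log (u j) := by
    rw [Finset.sum_sub_distrib]
    congr 1
    have : ∑ j, u j * (-(dv j) / T1 - Real.log Z)
        = ∑ j, (u j * (-(dv j) / T1) - u j * Real.log Z) := by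
      apply Finset.sum_congr rfl; intro j _; ring
    rw [this, Finset.sum_sub_distrib, ← Finset.sum_mul, hs, one_mul]
  have h2 : ∑ j, (Real.exp (-(dv j) / T1) / Z - u j) = 0 := by
    rw [Finset.sum_sub_distrib, hps, hs, sub_self]
  rw [h1, h2] at hsum
  have h3 : ∑ j, u j * (-(dv j) / T1) = -(∑ j, u j * dv j) / T1 := by
    rw [neg_div, Finset.sum_div, ← Finset.sum_neg_distrib]
    apply Finset.sum_congr rfl; intro j _; field_simp
  rw [h3] at hsum
  -- hsum : -(∑ u d)/T1 - log Z - ∑ u log u ≤ 0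
  have := mul_le_mul_of_nonneg_left hsum hT1.le
  have hT1ne : T1 ≠ 0 := ne_of_gt hT1
  nlinarith [this, mul_div_cancel₀ (-(∑ j, u j * dv j)) hT1ne]

/-- For a fixed probability vector `w`, the minimum of the empirical ITISC objective
`F(w,U) = ∑ i, w i * (∑ j, U i j * d i j + T1 * ∑ j, U i j * log (U i j))
          - T2 * ∑ i, w i * log (w i)`
over matrices `U` with probability-vector rows is attained and equals
`-T1 * ∑ i, w i * log (∑ j, exp (-(d i j)/T1)) - T2 * ∑ i, w i * log (w i)`. -/
theorem itisc_min_over_U (N C : ℕ) (hN : 0 < N) (hC : 0 < C)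
    (T1 T2 : ℝ) (hT1 : 0 < T1) (hT2 : 0 < T2)
    (d : Fin N → Fin C → ℝ) (w : Fin N → ℝ)
    (hw_nonneg : ∀ i, 0 ≤ w i) (hw_sum : ∑ i, w i = 1) :
    IsLeast
      {v : ℝ | ∃ U : Fin N → Fin C → ℝ,
        (∀ i, (∀ j, 0 ≤ U i j) ∧ ∑ j, U i j = 1) ∧
        v = ∑ i, w i * (∑ j, U i j * d i j + T1 * ∑ j, U i j * Real.log (U i j))
              - T2 * ∑ i, w i * Real.log (w i)}
      (-T1 * ∑ i, w i * Real.log (∑ j, Real.exp (-(d i j) / T1))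
        - T2 * ∑ i, w i * Real.log (w i)) := by
  haveI : Nonempty (Fin C) := ⟨⟨0, hC⟩⟩
  set Z : Fin N → ℝ := fun i => ∑ j, Real.exp (-(d i j) / T1) with hZdef
  have hZ : ∀ i, 0 < Z i := fun i =>
    Finset.sum_pos (fun j _ => Real.exp_pos _) Finset.univ_nonempty
  constructor
  · -- membership with U i j = exp(-d i j / T1)/Z i
    refine ⟨fun i j => Real.exp (-(d i j) / T1) / Z i, fun i =>
      ⟨fun j => div_nonneg (Real.exp_pos _).le (hZ i).le, by
        rw [← Finset.sum_div, div_self (ne_of_gt (hZ i))]⟩, ?_⟩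
    have hrow : ∀ i, (∑ j, Real.exp (-(d i j) / T1) / Z i * d i j
        + T1 * ∑ j, Real.exp (-(d i j) / T1) / Z i *
            Real.log (Real.exp (-(d i j) / T1) / Z i)) = -T1 * Real.log (Z i) := by
      intro i
      have hlog : ∀ j, Real.log (Real.exp (-(d i j) / T1) / Z i)
          = -(d i j) / T1 - Real.log (Z i) := by
        intro j
        rw [Real.log_div (Real.exp_ne_zero _) (ne_of_gt (hZ i)), Real.log_exp]
      have hps : ∑ j, Real.exp (-(d i j) / T1) / Z i = 1 := by
        rw [← Finset.sum_div, div_self (ne_of_gt (hZ i))]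
      calc (∑ j, Real.exp (-(d i j) / T1) / Z i * d i j)
            + T1 * ∑ j, Real.exp (-(d i j) / T1) / Z i *
              Real.log (Real.exp (-(d i j) / T1) / Z i)
          = (∑ j, Real.exp (-(d i j) / T1) / Z i * d i j)
            + T1 * ∑ j, (Real.exp (-(d i j) / T1) / Z i * (-(d i j) / T1)
              - Real.exp (-(d i j) / T1) / Z i * Real.log (Z i)) := by
            congr 1; congr 1
            apply Finset.sum_congr rfl; intro j _; rw [hlog j]; ring
        _ = -T1 * Real.log (Z i) := by
            rw [Finset.sum_sub_distrib, ← Finset.sum_mul, hps, one_mul]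
            have : ∑ j, Real.exp (-(d i j) / T1) / Z i * (-(d i j) / T1)
                = -(∑ j, Real.exp (-(d i j) / T1) / Z i * d i j) / T1 := by
              rw [neg_div, Finset.sum_div, ← Finset.sum_neg_distrib]
              apply Finset.sum_congr rfl; intro j _; field_simp
            rw [this]
            field_simp
            ring
    have : ∑ i, w i * (∑ j, Real.exp (-(d i j) / T1) / Z i * d i j
        + T1 * ∑ j, Real.exp (-(d i j) / T1) / Z i *
          Real.log (Real.exp (-(d i j) / T1) / Z i))
        = ∑ i, w i * (-T1 * Real.log (Z i)) := by
      apply Finset.sum_congr rfl; intro i _; rw [hrow i]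
    rw [this]
    have : ∑ i, w i * (-T1 * Real.log (Z i)) = -T1 * ∑ i, w i * Real.log (Z i) := by
      rw [Finset.mul_sum]; apply Finset.sum_congr rfl; intro i _; ring
    rw [this]
  · -- lower bound
    rintro v ⟨U, hU, rfl⟩
    have hle : ∀ i, w i * (-T1 * Real.log (Z i)) ≤
        w i * (∑ j, U i j * d i j + T1 * ∑ j, U i j * Real.log (U i j)) := by
      intro i
      exact mul_le_mul_of_nonneg_left
        (gibbs_row C hC T1 hT1 (d i) (U i) (hU i).1 (hU i).2) (hw_nonneg i)
    have h1 : -T1 * ∑ i, w i * Real.log (Z i) = ∑ i, w i * (-T1 * Real.log (Z i)) := by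
      rw [Finset.mul_sum]; apply Finset.sum_congr rfl; intro i _; ring
    have h2 := Finset.sum_le_sum (fun i (_ : i ∈ Finset.univ) => hle i)
    linarith [h2, h1.le, h1.ge]
end

section
/- Let N, C be positive integers, T1 > 0, T2 > 0, and let d_{ij} (1 ≤ i ≤ N, 1 ≤ j ≤ C) be real numbers. Then the max–min value sup over probability vectors w ∈ ℝ^N of ( inf over N×C matrices U with probability-vector rows of F(w,U) ), where F(w,U) = Σ_{i=1}^N w_i ( Σ_{j=1}^C u_{ij} d_{ij} + T1 Σ_{j=1}^C u_{ij} log u_{ij} ) − T2 Σ_{i=1}^N w_i log w_i, equals T2 · log( Σ_{i=1}^N ( Σ_{j=1}^C exp(−d_{ij}/T1) )^{−T1/T2} ). -/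
/-!
For a cost vector `c` and temperature `T > 0`, the free energy `⟨u, c⟩ + T ∑ u log u` over the
probability simplex is minimised by the Gibbs distribution `u ∝ exp (-c / T)`, with minimum
`-T log ∑ exp (-c / T)`: it differs from that value by `T` times the relative entropy of `u` with
respect to the Gibbs distribution, which is nonnegative. Applying this row by row settles the inner
infimum; the outer supremum is the same variational principle with the sign flipped, at
temperature `T2` and with payoffs `-T1 log ∑ⱼ exp (-d i j / T1)`.
-/

open Real Finset

section Gibbs

variable {ι : Type*} [Fintype ι]

lemma sub_le_mul_log_div {x y : ℝ} (hx : 0 ≤ x) (hy : 0 < y) : x - y ≤ x * log (x / y) :=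
  calc x - y = y * (x / y - 1) := by field_simp
    _ ≤ y * (x / y * log (x / y)) :=
      mul_le_mul_of_nonneg_left (self_sub_one_le_mul_log (div_nonneg hx hy.le)) hy.le
    _ = x * log (x / y) := by field_simp

lemma sum_mul_log_div_nonneg {u g : ι → ℝ} (hu : u ∈ stdSimplex ℝ ι) (hg : ∀ j, 0 < g j)
    (hg₁ : ∑ j, g j = 1) : 0 ≤ ∑ j, u j * log (u j / g j) := by
  have h := sum_le_sum fun j (_ : j ∈ univ) => sub_le_mul_log_div (hu.1 j) (hg j)
  rwa [sum_sub_distrib, hu.2, hg₁, sub_self] at h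

lemma sum_exp_pos [Nonempty ι] (f : ι → ℝ) : 0 < ∑ j, exp (f j) :=
  sum_pos (fun j _ => exp_pos (f j)) univ_nonempty

noncomputable def freeEnergy (T : ℝ) (c u : ι → ℝ) : ℝ :=
  ∑ j, u j * c j + T * ∑ j, u j * log (u j)

noncomputable def gibbs (T : ℝ) (c : ι → ℝ) (j : ι) : ℝ :=
  exp (-c j / T) / ∑ k, exp (-c k / T)

variable [Nonempty ι] {T : ℝ} (c : ι → ℝ)

lemma gibbs_pos (j : ι) : 0 < gibbs T c j :=
  div_pos (exp_pos _) (sum_exp_pos _)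

lemma gibbs_mem_stdSimplex : gibbs T c ∈ stdSimplex ℝ ι :=
  ⟨fun j => (gibbs_pos c j).le, by
    simp only [gibbs, ← sum_div]; exact div_self (sum_exp_pos _).ne'⟩

lemma log_gibbs (j : ι) : log (gibbs T c j) = -c j / T - log (∑ k, exp (-c k / T)) := by
  rw [gibbs, log_div (exp_pos _).ne' (sum_exp_pos _).ne', log_exp]

lemma freeEnergy_eq_add_relEntropy (hT : T ≠ 0) {u : ι → ℝ} (hu : ∑ j, u j = 1) :
    freeEnergy T c u =
      -T * log (∑ k, exp (-c k / T)) + T * ∑ j, u j * log (u j / gibbs T c j) := by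
  set Z := ∑ k, exp (-c k / T)
  have term : ∀ j, T * (u j * log (u j / gibbs T c j)) =
      T * (u j * log (u j)) + u j * c j + T * log Z * u j := by
    intro j
    rcases eq_or_ne (u j) 0 with h | h
    · simp [h]
    · rw [log_div h (gibbs_pos c j).ne', log_gibbs]
      have hc : T * (-c j / T) = -c j := mul_div_cancel₀ _ hT
      linear_combination (-u j) * hc
  rw [mul_sum, sum_congr rfl fun j _ => term j, sum_add_distrib, sum_add_distrib, ← mul_sum,
    ← mul_sum, hu, freeEnergy]
  ring

theorem isLeast_freeEnergy (hT : 0 < T) :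
    IsLeast (freeEnergy T c '' stdSimplex ℝ ι) (-T * log (∑ j, exp (-c j / T))) := by
  have hg := gibbs_mem_stdSimplex (T := T) c
  constructor
  · refine ⟨gibbs T c, hg, ?_⟩
    rw [freeEnergy_eq_add_relEntropy c hT.ne' hg.2]
    simp [div_self (gibbs_pos c _).ne']
  · rintro _ ⟨u, hu, rfl⟩
    rw [freeEnergy_eq_add_relEntropy c hT.ne' hu.2]
    exact le_add_of_nonneg_right
      (mul_nonneg hT.le (sum_mul_log_div_nonneg hu (gibbs_pos c) hg.2))

theorem isGreatest_logSumExp (hT : 0 < T) :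
    IsGreatest ((fun u => ∑ j, u j * c j - T * ∑ j, u j * log (u j)) '' stdSimplex ℝ ι)
      (T * log (∑ j, exp (c j / T))) := by
  have hneg : ∀ u : ι → ℝ,
      ∑ j, u j * c j - T * ∑ j, u j * log (u j) = -freeEnergy T (-c) u := by
    intro u
    simp only [freeEnergy, Pi.neg_apply, mul_neg, sum_neg_distrib]
    ring
  obtain ⟨⟨u, hu, hmin⟩, hlb⟩ := isLeast_freeEnergy (-c) hT
  simp only [Pi.neg_apply, neg_neg] at hmin hlb
  constructor
  · exact ⟨u, hu, by simp only [hneg, hmin]; ring⟩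
  · rintro _ ⟨v, hv, rfl⟩
    have := hlb ⟨v, hv, rfl⟩
    simp only [hneg]
    linarith

end Gibbs

lemma isLeast_sum_mul_sub {κ α : Type*} [Fintype κ] {f : κ → α → ℝ} {s : Set α}
    {m w : κ → ℝ} (b : ℝ) (hw : ∀ i, 0 ≤ w i) (h : ∀ i, IsLeast (f i '' s) (m i)) :
    IsLeast {r | ∃ U : κ → α, (∀ i, U i ∈ s) ∧ r = ∑ i, w i * f i (U i) - b}
      (∑ i, w i * m i - b) := by
  choose U hU hfU using fun i => (h i).1
  refine ⟨⟨U, hU, by simp only [hfU]⟩, ?_⟩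
  rintro _ ⟨V, hV, rfl⟩
  gcongr with i
  · exact hw i
  · exact (h i).2 ⟨V i, hV i, rfl⟩

/-- The max–min value of the empirical ITISC objective: the supremum over probability
vectors `w` of the infimum over matrices `U` with probability-vector rows of
`F(w,U) = ∑ i, w i * (∑ j, U i j * d i j + T1 * ∑ j, U i j * log (U i j))
          - T2 * ∑ i, w i * log (w i)`
equals `T2 * log (∑ i, (∑ j, exp (-(d i j)/T1)) ^ (-T1/T2))`. -/
theorem itisc_maxmin_value (N C : ℕ) (hN : 0 < N) (hC : 0 < C)
    (T1 T2 : ℝ) (hT1 : 0 < T1) (hT2 : 0 < T2)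
    (d : Fin N → Fin C → ℝ) :
    sSup {v : ℝ | ∃ w : Fin N → ℝ, (∀ i, 0 ≤ w i) ∧ (∑ i, w i = 1) ∧
      v = sInf {r : ℝ | ∃ U : Fin N → Fin C → ℝ,
        (∀ i, (∀ j, 0 ≤ U i j) ∧ ∑ j, U i j = 1) ∧
        r = ∑ i, w i * (∑ j, U i j * d i j + T1 * ∑ j, U i j * Real.log (U i j))
              - T2 * ∑ i, w i * Real.log (w i)}}
    = T2 * Real.log (∑ i, (∑ j, Real.exp (-(d i j) / T1)) ^ (-T1 / T2)) := by
  have := Fin.pos_iff_nonempty.mp hN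
  have := Fin.pos_iff_nonempty.mp hC
  set a : Fin N → ℝ := fun i => -T1 * log (∑ j, exp (-d i j / T1))
  have inner (w : Fin N → ℝ) (hw : w ∈ stdSimplex ℝ (Fin N)) :=
    isLeast_sum_mul_sub (T2 * ∑ i, w i * log (w i)) hw.1 fun i => isLeast_freeEnergy (d i) hT1
  convert (isGreatest_logSumExp a hT2).csSup_eq using 1
  · congr 1
    ext v
    constructor
    · rintro ⟨w, hw₀, hw₁, rfl⟩
      exact ⟨w, ⟨hw₀, hw₁⟩, (inner w ⟨hw₀, hw₁⟩).csInf_eq.symm⟩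
    · rintro ⟨w, hw, rfl⟩
      exact ⟨w, hw.1, hw.2, (inner w hw).csInf_eq.symm⟩
  · congr 2
    refine sum_congr rfl fun i _ => ?_
    rw [rpow_def_of_pos (sum_exp_pos _)]
    congr 1
    simp only [a]
    ring
end

section
/- Let S, N, C be positive integers, T1 > 0, T2 > 0, and let x_1, …, x_N ∈ ℝ^S be fixed. Define, for centers Y = (y_1, …, y_C) ∈ (ℝ^S)^C, R(Y) = T2 · log( Σ_{i=1}^N ( Σ_{j=1}^C exp(−‖x_i − y_j‖²/T1) )^{−T1/T2} ). Then for each k, R is differentiable with respect to y_k, and its gradient with respect to y_k equals Σ_{i=1}^N w_i u_{ik} · 2(y_k − x_i), where u_{ik} = exp(−‖x_i − y_k‖²/T1) / Σ_{j=1}^C exp(−‖x_i − y_j‖²/T1) and w_i = ( Σ_{j=1}^C exp(−‖x_i − y_j‖²/T1) )^{−T1/T2} / Σ_{l=1}^N ( Σ_{j=1}^C exp(−‖x_l − y_j‖²/T1) )^{−T1/T2}. -/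
open Real Finset

lemma normsq_fderiv {S : ℕ} (a b : EuclideanSpace ℝ (Fin S)) :
    HasFDerivAt (fun z : EuclideanSpace ℝ (Fin S) => ‖a - z‖ ^ 2)
      ((2 : ℝ) • innerSL ℝ (b - a)) b := by
  have h1 : HasFDerivAt (fun z : EuclideanSpace ℝ (Fin S) => a - z)
      (-(ContinuousLinearMap.id ℝ _)) b := by
    have := (hasFDerivAt_const (𝕜 := ℝ) a b).fun_sub (hasFDerivAt_id b)
    simpa using this
  have h2 := h1.inner ℝ h1
  have heq : (fun z : EuclideanSpace ℝ (Fin S) =>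
      (inner ℝ (a - z) (a - z) : ℝ)) = fun z => ‖a - z‖ ^ 2 := by
    funext z; rw [real_inner_self_eq_norm_sq]
  rw [heq] at h2
  refine h2.congr_fderiv (Eq.symm ?_)
  ext v
  simp [fderivInnerCLM_apply, real_inner_smul_left, inner_sub_left, inner_sub_right,
    real_inner_comm, mul_comm]
  ring

set_option maxHeartbeats 1000000 in
/-- The ITISC reformulation
`R(Y) = T2 * log (∑ i, (∑ j, exp (-‖x i - y j‖^2 / T1)) ^ (-T1/T2))`
is differentiable in each center `y k`, with gradient
`∑ i, w i * u i k • 2 • (y k - x i)` where `u i k` is the optimal fuzzy membership and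
`w i` the optimal importance-sampling weight. -/
theorem itisc_reformulation_gradient (S N C : ℕ) (hS : 0 < S) (hN : 0 < N) (hC : 0 < C)
    (T1 T2 : ℝ) (hT1 : 0 < T1) (hT2 : 0 < T2)
    (x : Fin N → EuclideanSpace ℝ (Fin S)) (y : Fin C → EuclideanSpace ℝ (Fin S))
    (k : Fin C) :
    let u : Fin N → Fin C → ℝ := fun i j =>
      Real.exp (-‖x i - y j‖ ^ 2 / T1) / ∑ j', Real.exp (-‖x i - y j'‖ ^ 2 / T1)
    let w : Fin N → ℝ := fun i =>
      (∑ j, Real.exp (-‖x i - y j‖ ^ 2 / T1)) ^ (-T1 / T2) /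
        ∑ l, (∑ j, Real.exp (-‖x l - y j‖ ^ 2 / T1)) ^ (-T1 / T2)
    HasGradientAt
      (fun z : EuclideanSpace ℝ (Fin S) =>
        T2 * Real.log (∑ i,
          (∑ j, Real.exp (-‖x i - Function.update y k z j‖ ^ 2 / T1)) ^ (-T1 / T2)))
      (∑ i, (w i * u i k * 2) • (y k - x i)) (y k) := by
  intro u w
  haveI : Nonempty (Fin C) := ⟨⟨0, hC⟩⟩
  haveI : Nonempty (Fin N) := ⟨⟨0, hN⟩⟩
  have hapos : ∀ i, 0 < ∑ j, Real.exp (-‖x i - y j‖ ^ 2 / T1) := fun i =>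
    Finset.sum_pos (fun j _ => Real.exp_pos _) Finset.univ_nonempty
  have hApos : 0 < ∑ l, (∑ j, Real.exp (-‖x l - y j‖ ^ 2 / T1)) ^ (-T1 / T2) := by
    exact Finset.sum_pos (fun l _ => Real.rpow_pos_of_pos (hapos l) _) Finset.univ_nonempty
  -- derivative of each inner sum
  have hsum : ∀ i, HasFDerivAt
      (fun z : EuclideanSpace ℝ (Fin S) => ∑ j, Real.exp (-‖x i - Function.update y k z j‖ ^ 2 / T1))
      (Real.exp (-‖x i - y k‖ ^ 2 / T1) •
        ((-(1 / T1)) • ((2 : ℝ) • innerSL ℝ (y k - x i)))) (y k) := by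
    intro i
    have h1 := (normsq_fderiv (x i) (y k)).const_mul (-(1 / T1))
    have h2 : (fun z : EuclideanSpace ℝ (Fin S) => -(1 / T1) * ‖x i - z‖ ^ 2)
        = fun z : EuclideanSpace ℝ (Fin S) => -‖x i - z‖ ^ 2 / T1 := by funext z; ring
    rw [h2] at h1
    have h3 := h1.exp
    have h4 := h3.add_const (∑ j ∈ Finset.univ.erase k, Real.exp (-‖x i - y j‖ ^ 2 / T1))
    have h5 : (fun z : EuclideanSpace ℝ (Fin S) => Real.exp (-‖x i - z‖ ^ 2 / T1) +
        ∑ j ∈ Finset.univ.erase k, Real.exp (-‖x i - y j‖ ^ 2 / T1))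
        = fun z : EuclideanSpace ℝ (Fin S) => ∑ j, Real.exp (-‖x i - Function.update y k z j‖ ^ 2 / T1) := by
      funext z
      rw [← Finset.add_sum_erase _ _ (Finset.mem_univ k), Function.update_self]
      congr 1
      refine Finset.sum_congr rfl fun j hj => ?_
      rw [Function.update_of_ne (Finset.ne_of_mem_erase hj)]
    rw [h5] at h4
    exact h4
  have hval : ∀ i, (∑ j, Real.exp (-‖x i - Function.update y k (y k) j‖ ^ 2 / T1))
      = ∑ j, Real.exp (-‖x i - y j‖ ^ 2 / T1) := by
    intro i; simp [Function.update_eq_self]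
  have hpow : ∀ i, HasFDerivAt
      (fun z : EuclideanSpace ℝ (Fin S) => (∑ j, Real.exp (-‖x i - Function.update y k z j‖ ^ 2 / T1)) ^ (-T1 / T2))
      (((-T1 / T2) * (∑ j, Real.exp (-‖x i - y j‖ ^ 2 / T1)) ^ (-T1 / T2 - 1)) •
        (Real.exp (-‖x i - y k‖ ^ 2 / T1) •
          ((-(1 / T1)) • ((2 : ℝ) • innerSL ℝ (y k - x i))))) (y k) := by
    intro i
    have := (hsum i).rpow_const (p := -T1 / T2) (Or.inl (by rw [hval i]; exact (hapos i).ne'))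
    rwa [hval i] at this
  have h6 := HasFDerivAt.fun_sum (u := Finset.univ) fun i _ => hpow i
  have h7 := h6.log (by
    show (∑ i, (∑ j, Real.exp (-‖x i - Function.update y k (y k) j‖ ^ 2 / T1)) ^ (-T1 / T2)) ≠ 0
    simp only [hval]
    exact hApos.ne')
  have h8 := h7.const_mul T2
  rw [hasGradientAt_iff_hasFDerivAt]
  refine h8.congr_fderiv ?_
  simp only [hval]
  ext v
  simp only [InnerProductSpace.toDual_apply_apply, ContinuousLinearMap.smul_apply,
    ContinuousLinearMap.sum_apply, innerSL_apply_apply, smul_eq_mul, inner_sum,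
    real_inner_smul_left, Finset.mul_sum, sum_inner]
  refine Finset.sum_congr rfl fun i _ => ?_
  have hai : (∑ j, Real.exp (-‖x i - y j‖ ^ 2 / T1)) ≠ 0 := (hapos i).ne'
  have hA : (∑ l, (∑ j, Real.exp (-‖x l - y j‖ ^ 2 / T1)) ^ (-T1 / T2)) ≠ 0 := hApos.ne'
  have hrw : (∑ j, Real.exp (-‖x i - y j‖ ^ 2 / T1)) ^ (-T1 / T2 - 1)
      = (∑ j, Real.exp (-‖x i - y j‖ ^ 2 / T1)) ^ (-T1 / T2) /
        (∑ j, Real.exp (-‖x i - y j‖ ^ 2 / T1)) := by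
    rw [Real.rpow_sub (hapos i), Real.rpow_one]
  simp only [u, w, hrw]
  field_simp
end

section
/- Let S, N, C be positive integers, T1 > 0, T2 > 0, x_1, …, x_N ∈ ℝ^S, and let Y = (y_1, …, y_C) ∈ (ℝ^S)^C be such that d_{ij} := ‖x_i − y_j‖² > 0 for all i, j. Define R^f(Y) = T2 · log( Σ_{i=1}^N ( Σ_{j=1}^C d_{ij}^{−1/T1} )^{−T1/T2} ). Then for each k, R^f is differentiable with respect to y_k at Y, and its gradient with respect to y_k equals ( Σ_{l=1}^N ( Σ_{j=1}^C d_{lj}^{−1/T1} )^{−T1/T2} )^{−T2} · Σ_{i=1}^N w_i^{1−T2} u_{ik}^{1+T1} · 2(y_k − x_i), where u_{ik} = d_{ik}^{−1/T1} / Σ_{j=1}^C d_{ij}^{−1/T1} and w_i = ( Σ_{j=1}^C d_{ij}^{−1/T1} )^{−T1/T2} / Σ_{l=1}^N ( Σ_{j=1}^C d_{lj}^{−1/T1} )^{−T1/T2}. -/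
open Real Finset

private lemma key_scalar (T1 T2 A B d : ℝ) (hT1 : 0 < T1) (hT2 : 0 < T2) (hA : 0 < A)
    (hB : 0 < B) (hd : 0 < d) :
    B ^ (-T2) * ((A ^ (-T1 / T2) / B) ^ (1 - T2) * (d ^ (-1 / T1) / A) ^ (1 + T1)) =
      B⁻¹ * (A ^ (-T1 / T2 - 1) * d ^ (-1 / T1 - 1)) := by
  obtain ⟨a, rfl⟩ : ∃ a, A = exp a := ⟨Real.log A, (Real.exp_log hA).symm⟩
  obtain ⟨b, rfl⟩ : ∃ b, B = exp b := ⟨Real.log B, (Real.exp_log hB).symm⟩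
  obtain ⟨e, rfl⟩ : ∃ e, d = exp e := ⟨Real.log d, (Real.exp_log hd).symm⟩
  rw [← Real.exp_neg]
  simp only [Real.rpow_def_of_pos (Real.exp_pos _), Real.log_exp, ← Real.exp_sub,
    ← Real.exp_add, div_eq_mul_inv, ← Real.exp_neg, ← Real.exp_add, Real.log_exp]
  rw [Real.exp_eq_exp]
  field_simp
  ring

/-- The Fuzzy-ITISC reformulation
`R^f(Y) = T2 * log (∑ i, (∑ j, (‖x i - y j‖^2) ^ (-1/T1)) ^ (-T1/T2))`
is differentiable in each center `y k` (whenever all distortions are positive), with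
gradient `(∑ l, (∑ j, d l j ^ (-1/T1)) ^ (-T1/T2)) ^ (-T2) •
∑ i, (w i ^ (1-T2) * u i k ^ (1+T1) * 2) • (y k - x i)`. -/
theorem fuzzy_itisc_reformulation_gradient (S N C : ℕ) (hS : 0 < S) (hN : 0 < N)
    (hC : 0 < C) (T1 T2 : ℝ) (hT1 : 0 < T1) (hT2 : 0 < T2)
    (x : Fin N → EuclideanSpace ℝ (Fin S)) (y : Fin C → EuclideanSpace ℝ (Fin S))
    (hpos : ∀ i j, 0 < ‖x i - y j‖ ^ 2) (k : Fin C) :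
    let dst : Fin N → Fin C → ℝ := fun i j => ‖x i - y j‖ ^ 2
    let u : Fin N → Fin C → ℝ := fun i j =>
      dst i j ^ (-1 / T1) / ∑ j', dst i j' ^ (-1 / T1)
    let w : Fin N → ℝ := fun i =>
      (∑ j, dst i j ^ (-1 / T1)) ^ (-T1 / T2) /
        ∑ l, (∑ j, dst l j ^ (-1 / T1)) ^ (-T1 / T2)
    HasGradientAt
      (fun z : EuclideanSpace ℝ (Fin S) =>
        T2 * Real.log (∑ i,
          (∑ j, (‖x i - Function.update y k z j‖ ^ 2 : ℝ) ^ (-1 / T1)) ^ (-T1 / T2)))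
      ((∑ l, (∑ j, dst l j ^ (-1 / T1)) ^ (-T1 / T2)) ^ (-T2) •
        ∑ i, (w i ^ (1 - T2) * u i k ^ (1 + T1) * 2) • (y k - x i)) (y k) := by
  intro dst u w
  have hApos : ∀ i, 0 < ∑ j, (‖x i - y j‖ ^ 2 : ℝ) ^ (-1 / T1) := fun i =>
    Finset.sum_pos (fun j _ => Real.rpow_pos_of_pos (hpos i j) _) ⟨k, mem_univ k⟩
  have : Nonempty (Fin N) := Fin.pos_iff_nonempty.mp hN
  have hBpos : 0 < ∑ l, (∑ j, (‖x l - y j‖ ^ 2 : ℝ) ^ (-1 / T1)) ^ (-T1 / T2) :=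
    Finset.sum_pos (fun l _ => Real.rpow_pos_of_pos (hApos l) _) univ_nonempty
  have hAi : ∀ i, (‖x i - y k‖ ^ 2 : ℝ) ^ (-1 / T1) +
      (∑ j ∈ univ.erase k, (‖x i - y j‖ ^ 2 : ℝ) ^ (-1 / T1))
      = ∑ j, (‖x i - y j‖ ^ 2 : ℝ) ^ (-1 / T1) := fun i =>
    Finset.add_sum_erase _ (fun j => (‖x i - y j‖ ^ 2 : ℝ) ^ (-1 / T1)) (mem_univ k)
  -- rewrite the function
  have hfun : (fun z : EuclideanSpace ℝ (Fin S) =>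
      T2 * Real.log (∑ i,
        (∑ j, (‖x i - Function.update y k z j‖ ^ 2 : ℝ) ^ (-1 / T1)) ^ (-T1 / T2)))
      = fun z : EuclideanSpace ℝ (Fin S) =>
      T2 * Real.log (∑ i, ((‖x i - z‖ ^ 2 : ℝ) ^ (-1 / T1) +
        ∑ j ∈ univ.erase k, (‖x i - y j‖ ^ 2 : ℝ) ^ (-1 / T1)) ^ (-T1 / T2)) := by
    funext z
    congr 2
    refine Finset.sum_congr rfl fun i _ => ?_
    congr 1
    rw [← Finset.add_sum_erase _ (fun j => (‖x i - Function.update y k z j‖ ^ 2 : ℝ) ^ (-1 / T1)) (mem_univ k), Function.update_self]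
    congr 1
    exact Finset.sum_congr rfl fun j hj => by rw [Function.update_of_ne (mem_erase.mp hj).1]
  rw [hfun]
  -- derivative of the inner functions
  have hinner : ∀ i : Fin N, HasFDerivAt
      (fun z : EuclideanSpace ℝ (Fin S) => (‖x i - z‖ ^ 2 : ℝ) ^ (-1 / T1) +
        ∑ j ∈ univ.erase k, (‖x i - y j‖ ^ 2 : ℝ) ^ (-1 / T1))
      ((-1 / T1 * (‖x i - y k‖ ^ 2 : ℝ) ^ (-1 / T1 - 1)) •
        (2 • (innerSL ℝ (x i - y k)).comp
          ((0 : EuclideanSpace ℝ (Fin S) →L[ℝ] EuclideanSpace ℝ (Fin S)) -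
            ContinuousLinearMap.id ℝ (EuclideanSpace ℝ (Fin S)))))
      (y k) := by
    intro i
    have h1 : HasFDerivAt (fun z : EuclideanSpace ℝ (Fin S) => x i - z)
        ((0 : EuclideanSpace ℝ (Fin S) →L[ℝ] EuclideanSpace ℝ (Fin S)) -
          ContinuousLinearMap.id ℝ (EuclideanSpace ℝ (Fin S))) (y k) :=
      (hasFDerivAt_const _ _).sub (hasFDerivAt_id _)
    exact (h1.norm_sq.rpow_const (Or.inl (hpos i k).ne')).add_const _
  have hpow : ∀ i : Fin N, HasFDerivAt
      (fun z : EuclideanSpace ℝ (Fin S) => ((‖x i - z‖ ^ 2 : ℝ) ^ (-1 / T1) +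
        ∑ j ∈ univ.erase k, (‖x i - y j‖ ^ 2 : ℝ) ^ (-1 / T1)) ^ (-T1 / T2))
      ((-T1 / T2 * (∑ j, (‖x i - y j‖ ^ 2 : ℝ) ^ (-1 / T1)) ^ (-T1 / T2 - 1)) •
        ((-1 / T1 * (‖x i - y k‖ ^ 2 : ℝ) ^ (-1 / T1 - 1)) •
          (2 • (innerSL ℝ (x i - y k)).comp
            ((0 : EuclideanSpace ℝ (Fin S) →L[ℝ] EuclideanSpace ℝ (Fin S)) -
              ContinuousLinearMap.id ℝ (EuclideanSpace ℝ (Fin S))))))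
      (y k) := by
    intro i
    have := (hinner i).rpow_const (p := -T1 / T2)
      (Or.inl (by rw [hAi i]; exact (hApos i).ne'))
    rwa [hAi i] at this
  have hsum := HasFDerivAt.fun_sum fun i (_ : i ∈ (univ : Finset (Fin N))) => hpow i
  have hBval : (∑ i, ((‖x i - y k‖ ^ 2 : ℝ) ^ (-1 / T1) +
      ∑ j ∈ univ.erase k, (‖x i - y j‖ ^ 2 : ℝ) ^ (-1 / T1)) ^ (-T1 / T2))
      = ∑ l, (∑ j, (‖x l - y j‖ ^ 2 : ℝ) ^ (-1 / T1)) ^ (-T1 / T2) := by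
    simp only [hAi]
  have hlog := hsum.log (by rw [hBval]; exact hBpos.ne')
  have hfin := hlog.const_mul T2
  rw [hBval] at hfin
  -- convert to gradient
  apply hasGradientAt_iff_hasFDerivAt.mpr
  refine hfin.congr_fderiv ?_
  refine ContinuousLinearMap.ext fun h => ?_
  simp only [ContinuousLinearMap.smul_apply, ContinuousLinearMap.coe_sum',
    Finset.sum_apply, ContinuousLinearMap.coe_comp', Function.comp_apply,
    ContinuousLinearMap.sub_apply, ContinuousLinearMap.zero_apply,
    ContinuousLinearMap.coe_id', id_eq, ContinuousLinearMap.neg_apply, innerSL_apply_apply, smul_eq_mul,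
    InnerProductSpace.toDual_apply_apply, sum_inner, real_inner_smul_left, zero_sub,
    inner_neg_right]
  simp only [dst, u, w]
  rw [Finset.mul_sum, Finset.mul_sum, Finset.mul_sum]
  refine Finset.sum_congr rfl fun i _ => ?_
  have key := key_scalar T1 T2 (∑ j, (‖x i - y j‖ ^ 2 : ℝ) ^ (-1 / T1))
    (∑ l, (∑ j, (‖x l - y j‖ ^ 2 : ℝ) ^ (-1 / T1)) ^ (-T1 / T2))
    (‖x i - y k‖ ^ 2) hT1 hT2 (hApos i) hBpos (hpos i k)
  have hTT : T2 * (-T1 / T2) * (-1 / T1) = 1 := by field_simp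
  have hrw : (y k - x i : EuclideanSpace ℝ (Fin S)) = -(x i - y k) := (neg_sub _ _).symm
  rw [hrw, inner_neg_left]
  linear_combination ((-2 : ℝ) * (inner ℝ (x i - y k) h : ℝ) *
      ((∑ l, (∑ j, (‖x l - y j‖ ^ 2 : ℝ) ^ (-1 / T1)) ^ (-T1 / T2))⁻¹ *
        ((∑ j, (‖x i - y j‖ ^ 2 : ℝ) ^ (-1 / T1)) ^ (-T1 / T2 - 1) *
          (‖x i - y k‖ ^ 2 : ℝ) ^ (-1 / T1 - 1)))) * hTT +
    ((2 : ℝ) * (inner ℝ (x i - y k) h : ℝ)) * key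
end
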